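/- arXiv:2309.11947 — 2 statements merged into one kernel-verified Lean document; each statement's English description precedes it below -/
import Mathlib

section
/- For partitions of n into at most 2 parts, the sum over all λ ⊢ n of (number of standard Young tableaux of shape λ) × (λ₀ − λ₁ + 1) equals 2ⁿ. -/
/-- `T` is a standard Young tableau on the set of cells `s`. -/
def IsSYT (s : Finset (ℕ × ℕ)) (T : ℕ × ℕ → ℕ) : Prop :=
  (∀ c ∉ s, T c = 0) ∧
  Set.BijOn T s (Set.Icc 1 s.card) ∧
  ∀ c ∈ s, ∀ c' ∈ s,
    ((c.1 = c'.1 ∧ c.2 < c'.2) ∨ (c.2 = c'.2 ∧ c.1 < c'.1)) → T c < T c'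

/-- The number of standard Young tableaux on the set of cells `s`. -/
noncomputable def sytCount (s : Finset (ℕ × ℕ)) : ℕ :=
  Nat.card {T : ℕ × ℕ → ℕ // IsSYT s T}

/-- Cells of the two-row Young diagram with row lengths `a ≥ b`. -/
def cellsTwoRow (a b : ℕ) : Finset (ℕ × ℕ) :=
  ((Finset.range a).image fun j => ((0 : ℕ), j)) ∪
    ((Finset.range b).image fun j => ((1 : ℕ), j))

/-!
Deleting the cell that holds the largest entry gives the branching rule: the number of standard
tableaux on a set of cells is the sum, over its corners `c`, of the number on the set without `c`.
For the two-row shape `(b + k, b)` this is exactly the recursion of walks on `ℕ` with steps `±1`,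
so that shape has as many tableaux as there are such walks of length `2b + k` from `0` to `k`.
Weighting a walk ending at `k` by `k + 1`, the total weight doubles with each step, because the two
continuations of a walk at `k ≥ 1` weigh `(k + 2) + k = 2 (k + 1)` and the only continuation of a
walk at `0` weighs `2`.
-/

open Finset Function

def corners (s : Finset (ℕ × ℕ)) : Finset (ℕ × ℕ) :=
  s.filter fun c => ∀ c' ∈ s, ¬((c.1 = c'.1 ∧ c.2 < c'.2) ∨ (c.2 = c'.2 ∧ c.1 < c'.1))

instance (s : Finset (ℕ × ℕ)) : Finite {T // IsSYT s T} := by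
  refine Finite.of_injective
    (fun T (c : s) => (⟨T.1 c, Nat.lt_succ_of_le (T.2.2.1.mapsTo c.2).2⟩ : Fin (#s + 1)))
    fun T U h => Subtype.ext (funext fun c => ?_)
  by_cases hc : c ∈ s
  · exact congrArg Fin.val (congrFun h ⟨c, hc⟩)
  · rw [T.2.1 c hc, U.2.1 c hc]

namespace IsSYT

variable {s : Finset (ℕ × ℕ)} {T : ℕ × ℕ → ℕ} {c : ℕ × ℕ}

lemma mem_corners (hT : IsSYT s T) (hc : c ∈ s) (hTc : T c = #s) : c ∈ corners s :=
  mem_filter.2 ⟨hc, fun c' hc' hcc' => by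
    have := hT.2.2 c hc c' hc' hcc'
    have := (hT.2.1.mapsTo hc').2
    omega⟩

lemma existsUnique_mem_corners (hT : IsSYT s T) (hs : s.Nonempty) :
    ∃! c, c ∈ corners s ∧ T c = #s := by
  obtain ⟨c, hc, hTc⟩ :=
    hT.2.1.surjOn ⟨Nat.one_le_iff_ne_zero.2 (card_ne_zero.2 hs), le_rfl⟩
  refine ⟨c, ⟨hT.mem_corners hc hTc, hTc⟩, fun c' ⟨hc', hTc'⟩ => ?_⟩
  exact hT.2.1.injOn (mem_filter.1 hc').1 hc (hTc'.trans hTc.symm)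

lemma erase (hT : IsSYT s T) (hc : c ∈ s) (hTc : T c = #s) :
    IsSYT (s.erase c) (update T c 0) := by
  obtain ⟨hzero, hbij, hmono⟩ := hT
  have hcard : #s = #(s.erase c) + 1 := (card_erase_add_one hc).symm
  refine ⟨fun d hd => ?_, ?_, fun d hd d' hd' hdd' => ?_⟩
  · by_cases hdc : d = c
    · simp [hdc]
    · rw [update_of_ne hdc]
      exact hzero d fun hds => hd (mem_erase.2 ⟨hdc, hds⟩)
  · have := hbij.sdiff_singleton (a := c) hc
    rw [hTc, hcard, ← Set.insert_Icc_right_eq_Icc_add_one (by omega),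
      Set.insert_sdiff_self_of_notMem (by simp)] at this
    rw [coe_erase]
    exact this.congr fun d hd => (update_of_ne hd.2 _ _).symm
  · rw [update_of_ne (ne_of_mem_erase hd), update_of_ne (ne_of_mem_erase hd')]
    exact hmono d (mem_of_mem_erase hd) d' (mem_of_mem_erase hd') hdd'

lemma update_of_mem_corners (hT : IsSYT (s.erase c) T) (hc : c ∈ corners s) :
    IsSYT s (update T c #s) := by
  obtain ⟨hzero, hbij, hmono⟩ := hT
  obtain ⟨hcs, hcorner⟩ := mem_filter.1 hc
  have hcard : #s = #(s.erase c) + 1 := (card_erase_add_one hcs).symm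
  have hlt : ∀ d ∈ s.erase c, T d < #s := fun d hd => by
    have := (hbij.mapsTo hd).2
    omega
  refine ⟨fun d hd => ?_, ?_, fun d hd d' hd' hdd' => ?_⟩
  · rw [update_of_ne (by rintro rfl; exact hd hcs)]
    exact hzero d fun hd' => hd (mem_of_mem_erase hd')
  · have := (hbij.congr fun d hd => (update_of_ne (ne_of_mem_erase hd) #s T).symm).insert
      (a := c) (by rw [update_self, hcard]; simp)
    rwa [update_self, hcard, Set.insert_Icc_right_eq_Icc_add_one (by omega), ← coe_insert,
      insert_erase hcs, ← hcard] at this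
  · by_cases hdc : d = c
    · exact absurd hdd' (hdc ▸ hcorner d' hd')
    by_cases hdc' : d' = c
    · rw [hdc', update_self, update_of_ne hdc]
      exact hlt d (mem_erase.2 ⟨hdc, hd⟩)
    · rw [update_of_ne hdc, update_of_ne hdc']
      exact hmono d (mem_erase.2 ⟨hdc, hd⟩) d' (mem_erase.2 ⟨hdc', hd'⟩) hdd'

end IsSYT

lemma sytCount_empty : sytCount ∅ = 1 := by
  rw [sytCount, Nat.card_eq_one_iff_unique]
  refine ⟨⟨fun T U => Subtype.ext (funext fun c => ?_)⟩,
    ⟨⟨0, fun _ _ => rfl, by simp, by simp⟩⟩⟩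
  rw [T.2.1 c (notMem_empty c), U.2.1 c (notMem_empty c)]

noncomputable def sytEquivSigmaCorners (s : Finset (ℕ × ℕ)) (hs : s.Nonempty) :
    {T // IsSYT s T} ≃ Σ c : corners s, {T // IsSYT (s.erase c) T} where
  toFun T :=
    have h := T.2.existsUnique_mem_corners hs
    ⟨⟨_, choose_mem _ _ h⟩, update T _ 0, T.2.erase (mem_filter.1 (choose_mem _ _ h)).1
      (choose_property _ _ h)⟩
  invFun T := ⟨update T.2 T.1 #s, T.2.2.update_of_mem_corners T.1.2⟩
  left_inv T := by
    have h := T.2.existsUnique_mem_corners hs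
    exact Subtype.ext ((update_idem ..).trans (update_eq_self_iff.2 (choose_property _ _ h).symm))
  right_inv := by
    rintro ⟨⟨c, hc⟩, T, hT⟩
    have hcs := (mem_filter.1 hc).1
    have h := (hT.update_of_mem_corners hc).existsUnique_mem_corners ⟨c, hcs⟩
    have hchoose : (corners s).choose _ h = c :=
      h.unique (choose_spec _ _ h) ⟨hc, update_self ..⟩
    refine Sigma.subtype_ext (Subtype.ext hchoose) ?_
    simp only [hchoose, update_idem]
    exact update_eq_self_iff.2 (hT.1 c (notMem_erase c s)).symm

lemma sytCount_eq_sum_corners (s : Finset (ℕ × ℕ)) (hs : s.Nonempty) :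
    sytCount s = ∑ c ∈ corners s, sytCount (s.erase c) := by
  rw [sytCount, Nat.card_congr (sytEquivSigmaCorners s hs), Nat.card_sigma,
    ← sum_coe_sort (corners s)]
  rfl

lemma mem_cellsTwoRow {a b : ℕ} {c : ℕ × ℕ} :
    c ∈ cellsTwoRow a b ↔ (c.1 = 0 ∧ c.2 < a) ∨ (c.1 = 1 ∧ c.2 < b) := by
  obtain ⟨i, j⟩ := c
  simp only [cellsTwoRow, mem_union, mem_image, mem_range, Prod.mk.injEq]
  grind

lemma mem_corners_cellsTwoRow {a b : ℕ} (hba : b ≤ a) {c : ℕ × ℕ} :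
    c ∈ corners (cellsTwoRow a b) ↔
      (c = (0, a - 1) ∧ b < a) ∨ (c = (1, b - 1) ∧ 0 < b) := by
  obtain ⟨i, j⟩ := c
  simp only [corners, mem_filter, mem_cellsTwoRow, Prod.mk.injEq]
  constructor
  · rintro ⟨hc, hcorner⟩
    have hright : ¬(i = 0 ∧ j + 1 < a ∨ i = 1 ∧ j + 1 < b) := fun h =>
      hcorner (i, j + 1) h (Or.inl ⟨rfl, j.lt_add_one⟩)
    have hbelow : ¬(i = 0 ∧ j < b) := fun h =>
      hcorner (1, j) (Or.inr ⟨rfl, h.2⟩) (Or.inr ⟨rfl, by omega⟩)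
    omega
  · rintro (⟨⟨rfl, rfl⟩, hab⟩ | ⟨⟨rfl, rfl⟩, hb⟩)
    all_goals refine ⟨by omega, fun c' hc' => ?_⟩
    all_goals omega

lemma erase_cellsTwoRow_succ_left (a b : ℕ) :
    (cellsTwoRow (a + 1) b).erase (0, a) = cellsTwoRow a b := by
  ext ⟨i, j⟩
  simp only [mem_erase, mem_cellsTwoRow, ne_eq, Prod.mk.injEq]
  omega

lemma erase_cellsTwoRow_succ_right (a b : ℕ) :
    (cellsTwoRow a (b + 1)).erase (1, b) = cellsTwoRow a b := by
  ext ⟨i, j⟩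
  simp only [mem_erase, mem_cellsTwoRow, ne_eq, Prod.mk.injEq]
  omega

lemma sytCount_cellsTwoRow_succ_zero (a : ℕ) :
    sytCount (cellsTwoRow (a + 1) 0) = sytCount (cellsTwoRow a 0) := by
  have hcorners : corners (cellsTwoRow (a + 1) 0) = {(0, a)} := by
    ext ⟨i, j⟩
    simp only [mem_corners_cellsTwoRow (Nat.zero_le _), mem_singleton, Prod.mk.injEq]
    omega
  rw [sytCount_eq_sum_corners _ ⟨(0, a), mem_cellsTwoRow.2 (by simp)⟩, hcorners, sum_singleton,
    erase_cellsTwoRow_succ_left]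

lemma sytCount_cellsTwoRow_succ_succ_self (b : ℕ) :
    sytCount (cellsTwoRow (b + 1) (b + 1)) = sytCount (cellsTwoRow (b + 1) b) := by
  have hcorners : corners (cellsTwoRow (b + 1) (b + 1)) = {(1, b)} := by
    ext ⟨i, j⟩
    simp only [mem_corners_cellsTwoRow le_rfl, mem_singleton, Prod.mk.injEq]
    omega
  rw [sytCount_eq_sum_corners _ ⟨(1, b), mem_cellsTwoRow.2 (by simp)⟩, hcorners, sum_singleton,
    erase_cellsTwoRow_succ_right]

lemma sytCount_cellsTwoRow_succ_succ {a b : ℕ} (hba : b < a) :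
    sytCount (cellsTwoRow (a + 1) (b + 1)) =
      sytCount (cellsTwoRow a (b + 1)) + sytCount (cellsTwoRow (a + 1) b) := by
  have hcorners : corners (cellsTwoRow (a + 1) (b + 1)) = {(0, a), (1, b)} := by
    ext ⟨i, j⟩
    simp only [mem_corners_cellsTwoRow (Nat.succ_le_succ hba.le), mem_insert, mem_singleton,
      Prod.mk.injEq]
    omega
  rw [sytCount_eq_sum_corners _ ⟨(1, b), mem_cellsTwoRow.2 (by simp)⟩, hcorners,
    sum_pair (by simp), erase_cellsTwoRow_succ_left, erase_cellsTwoRow_succ_right]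

/-- The number of walks of length `n` with steps `±1` from `0` to `k` that stay in `ℕ`;
equivalently, the multiplicity of the `(k + 1)`-dimensional irreducible `sl₂`-module
in `(ℂ²)^⊗n`. -/
def nonnegWalks : ℕ → ℕ → ℕ
  | 0, k => if k = 0 then 1 else 0
  | n + 1, 0 => nonnegWalks n 1
  | n + 1, k + 1 => nonnegWalks n k + nonnegWalks n (k + 2)

lemma nonnegWalks_succ_zero (n : ℕ) : nonnegWalks (n + 1) 0 = nonnegWalks n 1 := rfl

lemma nonnegWalks_succ_succ (n k : ℕ) :
    nonnegWalks (n + 1) (k + 1) = nonnegWalks n k + nonnegWalks n (k + 2) := rfl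

lemma exists_eq_of_nonnegWalks_ne_zero {n k : ℕ} (h : nonnegWalks n k ≠ 0) :
    ∃ b, n = 2 * b + k := by
  induction n generalizing k with
  | zero => exact ⟨0, by simp_all [nonnegWalks]⟩
  | succ n ih =>
    cases k with
    | zero =>
      obtain ⟨b, rfl⟩ := ih h
      exact ⟨b + 1, by ring⟩
    | succ k =>
      rw [nonnegWalks_succ_succ, ne_eq, Nat.add_eq_zero_iff, not_and_or] at h
      rcases h with h | h
      · obtain ⟨b, rfl⟩ := ih h
        exact ⟨b, by ring⟩
      · obtain ⟨b, rfl⟩ := ih h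
        exact ⟨b + 1, by ring⟩

lemma nonnegWalks_eq_zero_of_lt {n k : ℕ} (h : n < k) : nonnegWalks n k = 0 := by
  by_contra hne
  obtain ⟨b, rfl⟩ := exists_eq_of_nonnegWalks_ne_zero hne
  omega

lemma sum_range_nonnegWalks_shift (n : ℕ) :
    ∑ k ∈ range (n + 1), nonnegWalks n (k + 2) * (k + 2) + nonnegWalks n 1 =
      ∑ k ∈ range (n + 1), nonnegWalks n k * k :=
  calc ∑ k ∈ range (n + 1), nonnegWalks n (k + 2) * (k + 2) + nonnegWalks n 1
      = ∑ k ∈ range (n + 3), nonnegWalks n k * k := by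
        rw [sum_range_succ' _ (n + 2), sum_range_succ' _ (n + 1)]
        simp
    _ = ∑ k ∈ range (n + 1), nonnegWalks n k * k := by
        rw [sum_range_succ, sum_range_succ, nonnegWalks_eq_zero_of_lt (by omega : n < n + 1),
          nonnegWalks_eq_zero_of_lt (by omega : n < n + 2)]
        simp

lemma sum_range_nonnegWalks_mul_succ (n : ℕ) :
    ∑ k ∈ range (n + 2), nonnegWalks (n + 1) k * (k + 1) =
      2 * ∑ k ∈ range (n + 1), nonnegWalks n k * (k + 1) :=
  calc ∑ k ∈ range (n + 2), nonnegWalks (n + 1) k * (k + 1)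
      = ∑ k ∈ range (n + 1), (nonnegWalks n k + nonnegWalks n (k + 2)) * (k + 2) +
          nonnegWalks n 1 := by
        rw [sum_range_succ']
        simp [nonnegWalks_succ_succ, nonnegWalks_succ_zero]
    _ = ∑ k ∈ range (n + 1), nonnegWalks n k * (k + 2) +
          (∑ k ∈ range (n + 1), nonnegWalks n (k + 2) * (k + 2) + nonnegWalks n 1) := by
        rw [← add_assoc, ← sum_add_distrib]
        simp only [add_mul]
    _ = 2 * ∑ k ∈ range (n + 1), nonnegWalks n k * (k + 1) := by
        rw [sum_range_nonnegWalks_shift, ← sum_add_distrib, mul_sum]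
        exact sum_congr rfl fun k _ => by ring

lemma sum_range_nonnegWalks_mul (n : ℕ) :
    ∑ k ∈ range (n + 1), nonnegWalks n k * (k + 1) = 2 ^ n := by
  induction n with
  | zero => simp [nonnegWalks]
  | succ n ih => rw [sum_range_nonnegWalks_mul_succ, ih, pow_succ, mul_comm]

lemma sytCount_cellsTwoRow_eq_nonnegWalks : ∀ b k : ℕ,
    sytCount (cellsTwoRow (b + k) b) = nonnegWalks (2 * b + k) k
  | 0, 0 => by
    rw [show cellsTwoRow (0 + 0) 0 = ∅ by ext; simp [mem_cellsTwoRow], sytCount_empty]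
    rfl
  | b + 1, 0 => by
    rw [add_zero, sytCount_cellsTwoRow_succ_succ_self, sytCount_cellsTwoRow_eq_nonnegWalks b 1,
      show 2 * (b + 1) + 0 = 2 * b + 1 + 1 by ring, nonnegWalks_succ_zero]
  | 0, k + 1 => by
    have := sytCount_cellsTwoRow_eq_nonnegWalks 0 k
    simp only [zero_add, mul_zero] at this ⊢
    rw [sytCount_cellsTwoRow_succ_zero, this, nonnegWalks_succ_succ,
      nonnegWalks_eq_zero_of_lt (n := k) (k := k + 2) (by omega), add_zero]
  | b + 1, k + 1 => by
    rw [show b + 1 + (k + 1) = b + 1 + k + 1 by ring, sytCount_cellsTwoRow_succ_succ (by omega),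
      sytCount_cellsTwoRow_eq_nonnegWalks (b + 1) k, show b + 1 + k + 1 = b + (k + 2) by ring,
      sytCount_cellsTwoRow_eq_nonnegWalks b (k + 2),
      show 2 * (b + 1) + (k + 1) = 2 * (b + 1) + k + 1 by ring,
      show 2 * b + (k + 2) = 2 * (b + 1) + k by ring, nonnegWalks_succ_succ]
termination_by b k => 2 * b + k

/-- Schur–Weyl dimension identity for `d = 2`: summing over all partitions
`λ = (λ₀, λ₁)` of `n` into at most two parts, the product of the number of standard
Young tableaux of shape `λ` and `dim Q²_λ = λ₀ − λ₁ + 1` equals `2ⁿ`. -/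
theorem stmt6 (n : ℕ) :
    (∑ p ∈ ((Finset.range (n + 1)) ×ˢ (Finset.range (n + 1))).filter
        (fun p : ℕ × ℕ => p.2 ≤ p.1 ∧ p.1 + p.2 = n),
      sytCount (cellsTwoRow p.1 p.2) * (p.1 - p.2 + 1)) = 2 ^ n := by
  rw [← sum_range_nonnegWalks_mul n]
  refine sum_of_injOn (fun p => p.1 - p.2) ?_ ?_ ?_ ?_
  · rintro ⟨a, b⟩ hp ⟨a', b'⟩ hp' h
    simp only [mem_coe, mem_filter, mem_product, mem_range] at hp hp' h
    simp only [Prod.mk.injEq]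
    omega
  · rintro ⟨a, b⟩ hp
    simp only [mem_coe, mem_filter, mem_product, mem_range] at hp ⊢
    omega
  · intro k _ hnot
    by_contra hne
    obtain ⟨b, rfl⟩ := exists_eq_of_nonnegWalks_ne_zero (left_ne_zero_of_mul hne)
    refine hnot ⟨(b + k, b), ?_, by simp⟩
    simp only [mem_coe, mem_filter, mem_product, mem_range]
    omega
  · rintro ⟨a, b⟩ hp
    simp only [mem_filter, mem_product, mem_range] at hp
    obtain ⟨k, rfl⟩ := Nat.exists_eq_add_of_le hp.2.1
    obtain rfl := hp.2.2
    rw [sytCount_cellsTwoRow_eq_nonnegWalks, Nat.add_sub_cancel_left,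
      show b + k + b = 2 * b + k by ring]
end

section
/- For a partition λ of k into at most d parts, the sum over j from 0 to d−1 of dim Q^d_{λ+e_j} (interpreting invalid partitions as contributing 0, and with dimensions given by the Weyl dimension formula) equals d · dim Q^d_λ. -/
/-- Stanley's hook-content (Weyl dimension) formula for `dim Q^d_μ`. -/
def weylDim (d : ℕ) (l : Fin d → ℕ) : ℕ :=
  (∏ p ∈ Finset.univ.filter (fun p : Fin d × Fin d => p.1 < p.2),
      (l p.1 + (p.2 : ℕ) - (l p.2 + (p.1 : ℕ)))) /
    ∏ m ∈ Finset.Icc 1 (d - 1), Nat.factorial m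

/-- `λ + e_j`: add one box to the `j`-th part. -/
def addBox (d : ℕ) (l : Fin d → ℕ) (j : Fin d) : Fin d → ℕ :=
  fun i => if i = j then l i + 1 else l i

/-!
Put `v i = i - λ i`. For a partition `λ` the Weyl numerator is the Vandermonde determinant `Δ(v)`,
and the denominator `sf (d - 1)` divides every integer Vandermonde determinant. Adding a box in
row `j` replaces `v j` by `v j - 1`; if `λ + e_j` is not a partition then `v j - 1 = v (j - 1)`,
so `Δ` vanishes and the convention "invalid partitions contribute `0`" is automatic. It remains to
show `∑ j, Δ(v - e_j) = d Δ(v)`. Shifting one variable by `c` replaces row `j` of the Vandermonde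
matrix `V` by row `j` of `V P`, with `P` the unitriangular binomial matrix, and by multilinearity
`∑ j, det (V with row j replaced by (V P) j) = tr (adj V * V * P) = det V * tr P = d det V`.
-/

open Matrix Finset

namespace Matrix

variable {R : Type*} [CommRing R]

theorem det_updateRow_eq_sum_adjugate_mul {ι : Type*} [Fintype ι] [DecidableEq ι]
    (M : Matrix ι ι R) (j : ι) (w : ι → R) :
    (M.updateRow j w).det = ∑ i, adjugate M i j * w i := by
  rw [← cramer_transpose_apply, cramer_eq_adjugate_mulVec, ← adjugate_transpose]
  simp [mulVec, dotProduct]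

theorem sum_det_updateRow_mul {ι : Type*} [Fintype ι] [DecidableEq ι] (M P : Matrix ι ι R) :
    ∑ j, (M.updateRow j ((M * P) j)).det = M.det * P.trace := by
  simp_rw [det_updateRow_eq_sum_adjugate_mul]
  rw [Finset.sum_comm]
  calc ∑ i, ∑ j, adjugate M i j * (M * P) j i = (adjugate M * (M * P)).trace := by
        simp [trace, mul_apply]
    _ = M.det * P.trace := by
        rw [← Matrix.mul_assoc, adjugate_mul, smul_mul, Matrix.one_mul, trace_smul, smul_eq_mul]

/-- The matrix of `p ↦ p(X + c)` on polynomials of degree `< n`, in the monomial basis. -/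
def binomialShift {n : ℕ} (c : R) : Matrix (Fin n) (Fin n) R :=
  of fun m k => ((k : ℕ).choose m : R) * c ^ ((k : ℕ) - m)

theorem vandermonde_mul_binomialShift {n : ℕ} (v : Fin n → R) (c : R) :
    vandermonde v * binomialShift c = vandermonde fun i => v i + c := by
  ext i k
  simp only [mul_apply, vandermonde_apply, binomialShift, of_apply]
  rw [add_pow,
    Fin.sum_univ_eq_sum_range fun m => v i ^ m * (((k : ℕ).choose m : R) * c ^ ((k : ℕ) - m))]
  refine (Finset.sum_subset (range_subset_range.2 k.2) fun m _ hm => ?_).symm.trans ?_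
  · simp [Nat.choose_eq_zero_of_lt (not_lt.1 (mem_range.not.1 hm))]
  · exact Finset.sum_congr rfl fun m _ => by ring

theorem trace_binomialShift {n : ℕ} (c : R) :
    (binomialShift c : Matrix (Fin n) (Fin n) R).trace = n := by
  simp [trace, binomialShift]

theorem sum_det_vandermonde_update_add {n : ℕ} (v : Fin n → R) (c : R) :
    ∑ j, (vandermonde (Function.update v j (v j + c))).det = n * (vandermonde v).det := by
  have hrow : ∀ j, vandermonde (Function.update v j (v j + c))
      = (vandermonde v).updateRow j
          ((vandermonde v * binomialShift c : Matrix (Fin n) (Fin n) R) j) := by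
    intro j
    ext i k
    rcases eq_or_ne i j with rfl | hij
    · simp [vandermonde_mul_binomialShift]
    · simp [hij]
  simp_rw [hrow, sum_det_updateRow_mul, trace_binomialShift, mul_comm]

end Matrix

theorem prod_filter_lt_eq_prod_prod_Ioi {M : Type*} [CommMonoid M] {d : ℕ}
    (f : Fin d → Fin d → M) :
    ∏ p ∈ univ.filter (fun p : Fin d × Fin d => p.1 < p.2), f p.1 p.2
      = ∏ i : Fin d, ∏ j ∈ Ioi i, f i j := by
  simp_rw [prod_filter, Fintype.prod_prod_type, ← prod_filter, filter_lt_eq_Ioi]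

theorem natCast_weylDim_numerator {d : ℕ} {l : Fin d → ℕ} (hl : Antitone l) :
    ((∏ p ∈ univ.filter (fun p : Fin d × Fin d => p.1 < p.2),
        (l p.1 + (p.2 : ℕ) - (l p.2 + (p.1 : ℕ))) : ℕ) : ℤ)
      = (vandermonde fun i : Fin d => (i : ℤ) - l i).det := by
  rw [det_vandermonde, Nat.cast_prod, ← prod_filter_lt_eq_prod_prod_Ioi]
  refine prod_congr rfl fun p hp => ?_
  have hlt : p.1 < p.2 := by simpa using hp
  rw [Nat.cast_sub (Nat.add_le_add (hl hlt.le) hlt.le)]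
  push_cast
  ring

theorem weylDim_mul_superFactorial {n : ℕ} {l : Fin (n + 1) → ℕ} (hl : Antitone l) :
    (weylDim (n + 1) l : ℤ) * n.superFactorial = (vandermonde fun i => (i : ℤ) - l i).det := by
  have hdvd := superFactorial_dvd_vandermonde_det fun i => (i : ℤ) - l i
  rw [← natCast_weylDim_numerator hl, Int.natCast_dvd_natCast] at hdvd
  rw [weylDim, Nat.add_sub_cancel, Nat.prod_Icc_factorial, ← Nat.cast_mul,
    Nat.div_mul_cancel hdvd, natCast_weylDim_numerator hl]

theorem exists_succ_eq_of_not_antitone_addBox {n : ℕ} {l : Fin (n + 1) → ℕ} (hl : Antitone l)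
    {j : Fin (n + 1)} (h : ¬ Antitone (addBox (n + 1) l j)) :
    ∃ i : Fin n, i.succ = j ∧ l i.castSucc = l i.succ := by
  obtain ⟨i, hi⟩ := not_forall.1 (mt Fin.antitone_iff_succ_le.2 h)
  have hmono := hl (Fin.castSucc_le_succ i)
  have hj : i.succ = j := by
    by_contra hne
    simp only [addBox, if_neg hne] at hi
    split_ifs at hi <;> omega
  subst hj
  refine ⟨i, rfl, ?_⟩
  simp [addBox, i.castSucc_lt_succ.ne] at hi
  omega

theorem natCast_sub_addBox_eq_update (d : ℕ) (l : Fin d → ℕ) (j : Fin d) :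
    (fun i : Fin d => (i : ℤ) - addBox d l j i)
      = Function.update (fun i : Fin d => (i : ℤ) - l i) j ((j : ℤ) - l j + -1) := by
  ext i
  rcases eq_or_ne i j with rfl | hij
  · simp [addBox]; ring
  · simp [addBox, hij]

theorem ite_weylDim_addBox_mul_superFactorial {n : ℕ} {l : Fin (n + 1) → ℕ} (hl : Antitone l)
    (j : Fin (n + 1)) [Decidable (Antitone (addBox (n + 1) l j))] :
    ((if Antitone (addBox (n + 1) l j) then weylDim (n + 1) (addBox (n + 1) l j) else 0 : ℕ) : ℤ)
        * n.superFactorial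
      = (vandermonde (Function.update (fun i : Fin (n + 1) => (i : ℤ) - l i) j
          ((j : ℤ) - l j + -1))).det := by
  rw [← natCast_sub_addBox_eq_update]
  split_ifs with hgood
  · exact weylDim_mul_superFactorial hgood
  · obtain ⟨i, rfl, hi⟩ := exists_succ_eq_of_not_antitone_addBox hl hgood
    rw [Nat.cast_zero, zero_mul]
    refine ((det_vandermonde_eq_zero_iff (R := ℤ)).2
      ⟨i.castSucc, i.succ, ?_, i.castSucc_lt_succ.ne⟩).symm
    simp [addBox, i.castSucc_lt_succ.ne, hi]

open scoped Classical in
theorem stmt9_general (d : ℕ) (hd : 1 ≤ d) (lam : Fin d → ℕ)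
    (hmono : Antitone lam) :
    (∑ j : Fin d, if Antitone (addBox d lam j) then weylDim d (addBox d lam j) else 0)
      = d * weylDim d lam := by
  obtain ⟨n, rfl⟩ := Nat.exists_eq_add_of_le' hd
  have hsf : (n.superFactorial : ℤ) ≠ 0 := by
    rw [← Nat.prod_Icc_factorial]
    exact_mod_cast (prod_pos fun m _ => Nat.factorial_pos m).ne'
  refine Nat.cast_injective (R := ℤ) (mul_right_cancel₀ hsf ?_)
  rw [Nat.cast_sum, sum_mul]
  simp_rw [ite_weylDim_addBox_mul_superFactorial hmono]
  rw [sum_det_vandermonde_update_add, Nat.cast_mul, mul_assoc,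
    weylDim_mul_superFactorial hmono]

open scoped Classical in
/-- Pieri rule at the level of dimensions: for a partition `λ` of `k` into at most `d`
parts, `Σ_{j=0}^{d−1} dim Q^d_{λ+e_j}` (invalid partitions contributing `0`)
equals `d · dim Q^d_λ`. -/
theorem stmt9 (d k : ℕ) (hd : 1 ≤ d) (lam : Fin d → ℕ)
    (hmono : Antitone lam) (hsum : ∑ i, lam i = k) :
    (∑ j : Fin d, if Antitone (addBox d lam j) then weylDim d (addBox d lam j) else 0)
      = d * weylDim d lam :=
  stmt9_general d hd lam hmono
end
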